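/- For any invertible S ∈ ℝ^{r×r}, the condition number κ(S) = σ_1(S)/σ_r(S) satisfies κ(S) ≤ exp( R(S) / (√2 · σ_r(S)²) ), where R(S) = ‖SᵀS − (‖S‖_F²/r) I‖_F. -/

import Mathlib

/-! The squares σᵢ² of the singular values are the eigenvalues λᵢ of SᵀS, and with
c = ‖S‖_F²/r one has R(S)² = ∑ᵢ (λᵢ - c)². Two terms of such a sum already give
(λ₁ - λ_r)² ≤ 2((λ₁ - c)² + (λ_r - c)²) ≤ 2R(S)², i.e. σ₁² - σ_r² ≤ √2 R(S).
On the other side, (σ₁/σ_r)² = 1 + t ≤ eᵗ with t = (σ₁² - σ_r²)/σ_r², so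
σ₁/σ_r ≤ exp((σ₁² - σ_r²)/(2σ_r²)), and the two bounds combine. -/

open Matrix BigOperators

noncomputable def frob {m n : ℕ} (A : Matrix (Fin m) (Fin n) ℝ) : ℝ :=
  Real.sqrt (∑ i, ∑ j, (A i j) ^ 2)

noncomputable def finner {m n : ℕ} (A B : Matrix (Fin m) (Fin n) ℝ) : ℝ :=
  (Bᵀ * A).trace

noncomputable def Rreg {r : ℕ} (S : Matrix (Fin r) (Fin r) ℝ) : ℝ :=
  frob (Sᵀ * S - ((frob S) ^ 2 / (r : ℝ)) • 1)

noncomputable def sv {r : ℕ} (S : Matrix (Fin r) (Fin r) ℝ) (i : Fin r) : ℝ :=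
  Real.sqrt ((show (Sᵀ * S).IsHermitian by
    first
    | exact Matrix.IsSymm.isHermitian (Matrix.isSymm_transpose_mul_self S)
    | simpa using Matrix.isHermitian_conjTranspose_mul_self S).eigenvalues i)

noncomputable def gradR {r : ℕ} (S : Matrix (Fin r) (Fin r) ℝ) : Matrix (Fin r) (Fin r) ℝ :=
  (2 / Rreg S) • (S * (Sᵀ * S - ((frob S) ^ 2 / (r : ℝ)) • 1))

namespace Matrix

variable {n 𝕜 : Type*} [Fintype n] [DecidableEq n] [RCLike 𝕜]

theorem trace_conjStarAlgAut (U : unitary (Matrix n n 𝕜)) (M : Matrix n n 𝕜) :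
    (Unitary.conjStarAlgAut 𝕜 _ U M).trace = M.trace := by
  rw [Unitary.conjStarAlgAut_apply, trace_mul_cycle, Unitary.coe_star_mul_self, one_mul]

theorem IsHermitian.trace_sub_smul_one_sq {A : Matrix n n 𝕜} (hA : A.IsHermitian) (c : ℝ) :
    ((A - (c : 𝕜) • 1) * (A - (c : 𝕜) • 1)).trace =
      ∑ i, ((hA.eigenvalues i - c : ℝ) : 𝕜) ^ 2 := by
  set U := hA.eigenvectorUnitary
  have hdiag : A - (c : 𝕜) • 1 =
      Unitary.conjStarAlgAut 𝕜 _ U (diagonal fun i ↦ ((hA.eigenvalues i - c : ℝ) : 𝕜)) := by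
    conv_lhs => rw [hA.spectral_theorem]
    rw [← map_one (Unitary.conjStarAlgAut 𝕜 _ U), ← map_smul, ← map_sub]
    congr 1
    ext i j
    by_cases h : i = j <;> simp [h, diagonal, Algebra.algebraMap_eq_smul_one, sub_smul]
  rw [hdiag, ← map_mul, trace_conjStarAlgAut, diagonal_mul_diagonal, trace_diagonal]
  simp only [sq]

end Matrix

open Matrix

theorem frob_sq {m n : ℕ} (A : Matrix (Fin m) (Fin n) ℝ) : frob A ^ 2 = (Aᵀ * A).trace := by
  rw [frob, Real.sq_sqrt (by positivity), trace, Finset.sum_comm]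
  simp [diag, mul_apply, sq]

theorem frob_sub_smul_one_sq {n : ℕ} {A : Matrix (Fin n) (Fin n) ℝ} (hA : A.IsHermitian) (c : ℝ) :
    frob (A - c • 1) ^ 2 = ∑ i, (hA.eigenvalues i - c) ^ 2 := by
  have hsymm : (A - c • 1)ᵀ = A - c • 1 := by
    rw [← conjTranspose_eq_transpose_of_trivial]
    exact (hA.sub (isHermitian_one.smul (IsSelfAdjoint.all c))).eq
  rw [frob_sq, hsymm]
  simpa using hA.trace_sub_smul_one_sq c

theorem sq_sub_le_two_mul_sum_sq_sub {ι : Type*} [Fintype ι] (x : ι → ℝ) (c : ℝ) (i j : ι) :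
    (x i - x j) ^ 2 ≤ 2 * ∑ k, (x k - c) ^ 2 := by
  classical
  rcases eq_or_ne i j with rfl | hij
  · rw [sub_self, zero_pow two_ne_zero]
    positivity
  have hpair : (x i - c) ^ 2 + (x j - c) ^ 2 ≤ ∑ k, (x k - c) ^ 2 := by
    rw [← Finset.sum_pair hij (f := fun k ↦ (x k - c) ^ 2)]
    exact Finset.sum_le_sum_of_subset_of_nonneg (Finset.subset_univ _) fun k _ _ ↦ sq_nonneg _
  nlinarith [sq_nonneg (x i + x j - 2 * c)]

theorem div_le_exp_sq_sub_sq_div (x : ℝ) {y : ℝ} (hy : 0 < y) :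
    x / y ≤ Real.exp ((x ^ 2 - y ^ 2) / (2 * y ^ 2)) := by
  refine le_of_pow_le_pow_left₀ two_ne_zero (Real.exp_nonneg _) ?_
  calc (x / y) ^ 2 = (x ^ 2 - y ^ 2) / y ^ 2 + 1 := by field_simp; ring
    _ ≤ Real.exp ((x ^ 2 - y ^ 2) / y ^ 2) := Real.add_one_le_exp _
    _ = Real.exp ((x ^ 2 - y ^ 2) / (2 * y ^ 2)) ^ 2 := by
      rw [sq (Real.exp _), ← Real.exp_add]; congr 1; ring

theorem posSemidef_transpose_mul_self {m n R : Type*} [Fintype m] [Fintype n] [CommRing R]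
    [PartialOrder R] [StarRing R] [StarOrderedRing R] [TrivialStar R] (S : Matrix m n R) :
    (Sᵀ * S).PosSemidef := by
  simpa [conjTranspose_eq_transpose_of_trivial] using posSemidef_conjTranspose_mul_self S

theorem sv_sq {r : ℕ} (S : Matrix (Fin r) (Fin r) ℝ) (i : Fin r) :
    sv S i ^ 2 = (posSemidef_transpose_mul_self S).isHermitian.eigenvalues i :=
  Real.sq_sqrt ((posSemidef_transpose_mul_self S).eigenvalues_nonneg i)

theorem sv_pos {r : ℕ} {S : Matrix (Fin r) (Fin r) ℝ} (hS : IsUnit S) (i : Fin r) : 0 < sv S i := by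
  have hpd : (Sᵀ * S).PosDef := by
    simpa [conjTranspose_eq_transpose_of_trivial] using
      PosDef.conjTranspose_mul_self S (mulVec_injective_of_isUnit hS)
  exact Real.sqrt_pos.mpr (hpd.eigenvalues_pos i)

theorem sv_sq_sub_sv_sq_le {r : ℕ} (S : Matrix (Fin r) (Fin r) ℝ) (i j : Fin r) :
    sv S i ^ 2 - sv S j ^ 2 ≤ Real.sqrt 2 * Rreg S := by
  have hvar : (sv S i ^ 2 - sv S j ^ 2) ^ 2 ≤ 2 * Rreg S ^ 2 := by
    rw [Rreg, frob_sub_smul_one_sq (posSemidef_transpose_mul_self S).isHermitian, sv_sq, sv_sq]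
    exact sq_sub_le_two_mul_sum_sq_sub _ _ i j
  have hR : 0 ≤ Rreg S := Real.sqrt_nonneg _
  refine le_of_pow_le_pow_left₀ two_ne_zero (by positivity) ?_
  rwa [mul_pow, Real.sq_sqrt zero_le_two]

theorem stmt5 {r : ℕ} (hr : 0 < r) (S : Matrix (Fin r) (Fin r) ℝ) (hS : IsUnit S) :
    (⨆ i, sv S i) / (⨅ i, sv S i)
      ≤ Real.exp (Rreg S / (Real.sqrt 2 * (⨅ i, sv S i) ^ 2)) := by
  have : Nonempty (Fin r) := ⟨⟨0, hr⟩⟩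
  obtain ⟨i, hi_sup⟩ := exists_eq_ciSup_of_finite (f := sv S)
  obtain ⟨j, hj_inf⟩ := exists_eq_ciInf_of_finite (f := sv S)
  rw [← hi_sup, ← hj_inf]
  have hj_pos := sv_pos hS j
  calc sv S i / sv S j ≤ Real.exp ((sv S i ^ 2 - sv S j ^ 2) / (2 * sv S j ^ 2)) :=
        div_le_exp_sq_sub_sq_div _ hj_pos
    _ ≤ Real.exp (Real.sqrt 2 * Rreg S / (2 * sv S j ^ 2)) := by
      gcongr
      exact sv_sq_sub_sv_sq_le S i j
    _ = Real.exp (Rreg S / (Real.sqrt 2 * sv S j ^ 2)) := by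
      congr 1
      field_simp
      rw [Real.sq_sqrt zero_le_two, mul_comm]
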